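/- arXiv:2512.22456 — 2 statements merged into one kernel-verified Lean document; each statement's English description precedes it below -/
import Mathlib

section
/- Let G be a finite group acting transitively on Ω = [G:M] with point stabilizer M. If Q̌(G) < 1/2, then for any two points α, β ∈ Ω there exists γ ∈ Ω such that G_α ∩ G_γ = 1 and G_β ∩ G_γ = 1; that is, any two vertices of the Saxl graph Σ(G) have a common neighbour. -/
open Matrix MulAction

namespace BG

/-! ### Unitary groups -/

section Unitary

variable (F : Type) [Field F] [StarRing F]

/-- The general unitary group `GU(3,q)` w.r.t. the Hermitian form with identity Gram matrix. -/
abbrev GU3 : Type := Matrix.unitaryGroup (Fin 3) F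

/-- The special unitary group `SU(3,q)` as a subgroup of `GU(3,q)`. -/
def SU3 : Subgroup (GU3 F) where
  carrier := {A | ((A : Matrix (Fin 3) (Fin 3) F)).det = 1}
  one_mem' := by simp [Set.mem_setOf_eq]
  mul_mem' := by
    intro a b ha hb
    simp only [Set.mem_setOf_eq] at *
    rw [Matrix.UnitaryGroup.mul_val, Matrix.det_mul, ha, hb, one_mul]
  inv_mem' := by
    intro a ha
    simp only [Set.mem_setOf_eq] at *
    rw [Matrix.UnitaryGroup.inv_val, Matrix.star_eq_conjTranspose, Matrix.det_conjTranspose, ha,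
      star_one]

/-- The projective general unitary group `PGU(3,q) = GU(3,q)/Z(GU(3,q))`. -/
abbrev PGU3 : Type := GU3 F ⧸ Subgroup.center (GU3 F)

/-- The projective special unitary group `PSU(3,q) = SU(3,q)/Z(SU(3,q))`. -/
abbrev PSU3 : Type := ↥(SU3 F) ⧸ Subgroup.center ↥(SU3 F)

/-- `PSU(3,q)` identified with a (normal) subgroup of `PGU(3,q)`: the image of `SU(3,q)`. -/
def Tsub : Subgroup (PGU3 F) :=
  (SU3 F).map (QuotientGroup.mk' (Subgroup.center (GU3 F)))

/-- The Hermitian form on `F³` (identity Gram matrix). -/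
def hermForm (u v : Fin 3 → F) : F := ∑ i, star (u i) * v i

end Unitary

/-- `SO(3,q)`: the special orthogonal group of a 3-dimensional space over `K`,
realized as the orthogonal (= unitary for the trivial star) matrices of determinant 1. -/
def SO3 (K : Type) [Field K] : Subgroup (@Matrix.unitaryGroup (Fin 3) _ _ K _ starRingOfComm) :=
  @SU3 K _ starRingOfComm

/-- `PSL(2,R)`. -/
abbrev PSL2 (R : Type) [CommRing R] : Type :=
  Matrix.SpecialLinearGroup (Fin 2) R ⧸ Subgroup.center (Matrix.SpecialLinearGroup (Fin 2) R)

/-! ### Permutation group notions -/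

section Perm

variable (G : Type) [Group G] (Ω : Type) [MulAction G Ω]

/-- The union of the regular suborbits of `G` relative to `α`; equivalently, the
neighbourhood of `α` in the Saxl graph (when `b(G) = 2`). -/
def SaxlNbr (α : Ω) : Set Ω := {β | stabilizer G α ⊓ stabilizer G β = ⊥}

/-- `Γ ∩ Γ^g ≠ ∅` for all `g ∈ G`, where `Γ` is the union of the regular suborbits
relative to any point `α`. -/
def BGProp : Prop :=
  ∀ (α : Ω) (g : G), ∃ γ, γ ∈ SaxlNbr G Ω α ∧ γ ∈ (fun x => g • x) '' SaxlNbr G Ω α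

/-- The base size of `G` on `Ω` equals two: some pair of points is a base,
but no single point is. -/
def BaseSizeTwo : Prop :=
  (∃ α β : Ω, stabilizer G α ⊓ stabilizer G β = ⊥) ∧ ∀ α : Ω, stabilizer G α ≠ ⊥

/-- A primitive action: transitive, and every block is trivial. -/
def IsPrimitiveAction : Prop :=
  MulAction.IsPretransitive G Ω ∧
    ∀ B : Set Ω, MulAction.IsBlock G B → B.Subsingleton ∨ B = Set.univ

end Perm

/-- A minimal normal subgroup. -/
def IsMinimalNormal {G : Type} [Group G] (N : Subgroup G) : Prop :=
  N.Normal ∧ N ≠ ⊥ ∧ ∀ K : Subgroup G, K.Normal → K ≠ ⊥ → K ≤ N → K = N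

/-- The socle of a group: the subgroup generated by all minimal normal subgroups. -/
def socle (G : Type) [Group G] : Subgroup G :=
  sSup {N : Subgroup G | IsMinimalNormal N}

/-! ### The quantity `Q̌(G)` -/

section Qcheck

variable (G : Type) [Group G]

/-- `S` is a set of representatives of the `M`-conjugacy classes of subgroups of prime
order of `M`. -/
def IsPrimeOrderClassReps (M : Subgroup G) (S : Finset (Subgroup G)) : Prop :=
  (∀ H ∈ S, H ≤ M ∧ (Nat.card H).Prime) ∧
    ∀ K : Subgroup G, K ≤ M → (Nat.card K).Prime →
      ∃! H, H ∈ S ∧ ∃ g ∈ M, K.map (MulAut.conj g).toMonoidHom = H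

variable (Ω : Type) [MulAction G Ω]

/-- The number of points of `Ω` fixed by (every element of) `H`. -/
noncomputable def nFix (H : Subgroup G) : ℕ :=
  Nat.card {ω : Ω // ∀ h ∈ H, h • ω = ω}

/-- The quantity `Q̌(G)` relative to a point stabilizer `M` and a set `S` of
representatives of the conjugacy classes of prime order subgroups of `M`. -/
noncomputable def Qcheck (M : Subgroup G) (S : Finset (Subgroup G)) : ℚ :=
  ((Nat.card M : ℚ) / (Nat.card Ω)) *
    ∑ H ∈ S, ((Nat.card H : ℚ) - 1) * (nFix G Ω H) / (Nat.card ↥(M ⊓ Subgroup.normalizer (H : Set G)))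

end Qcheck

/-! ### `PΓU(3,q)` as a semidirect product -/

section Gamma

variable (F : Type) [Field F] [StarRing F]

/-- The statement that `fbar` is the automorphism of `PGU(3,q)` induced by the
field automorphism `x ↦ x^p` applied entrywise. -/
def IsFrobOnPGU (p : ℕ) (fbar : MulAut (PGU3 F)) : Prop :=
  ∀ A B : GU3 F,
    ((B : Matrix (Fin 3) (Fin 3) F) = (A : Matrix (Fin 3) (Fin 3) F).map (fun x => x ^ p)) →
      fbar (QuotientGroup.mk A) = (QuotientGroup.mk B : PGU3 F)

/-- `PΓU(3,q) = PGU(3,q) ⋊ ⟨f⟩`. -/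
abbrev PGammaU3 (fbar : MulAut (PGU3 F)) : Type :=
  SemidirectProduct (PGU3 F) ↥(Subgroup.zpowers fbar) (Subgroup.zpowers fbar).subtype

/-- The field automorphism `f` as an element of `PΓU(3,q)`. -/
def fElem (fbar : MulAut (PGU3 F)) : PGammaU3 F fbar :=
  SemidirectProduct.inr ⟨fbar, Subgroup.mem_zpowers fbar⟩

/-- The subgroup `PGU(3,q'):⟨f⟩` of `PΓU(3,q)`, generated by the embedded copy of
`PGU(3,q')` (the centralizer of `f^(2m')` in `PGU(3,q)`) together with `f`. -/
def MGamma (fbar : MulAut (PGU3 F)) (m' : ℕ) : Subgroup (PGammaU3 F fbar) :=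
  Subgroup.closure
    ((SemidirectProduct.inl '' {x : PGU3 F | (fbar ^ (2 * m')) x = x}) ∪ {fElem F fbar})

/-- The subgroup `PΣU(3,q) = PSU(3,q) ⋊ ⟨f⟩` of `PΓU(3,q)`, generated by the image of
`PSU(3,q)` together with `f`. -/
def GSigma (fbar : MulAut (PGU3 F)) : Subgroup (PGammaU3 F fbar) :=
  Subgroup.closure
    ((SemidirectProduct.inl '' (Tsub F : Set (PGU3 F))) ∪ {fElem F fbar})

end Gamma

end BG

namespace BG

/-- `A` stabilizes the projective point (line) spanned by `v`. -/
def stabsLine (F : Type) [Field F] [StarRing F] (A : GU3 F) (v : Fin 3 → F) : Prop :=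
  ∃ c : F, c ≠ 0 ∧ (A : Matrix (Fin 3) (Fin 3) F).mulVec v = c • v

/-- `z` is a regular unipotent element of `T = PSU(3,q)`: it has order `p` and is not
conjugate into the center of a Sylow `p`-subgroup. -/
def IsRegUnip (F : Type) [Field F] [StarRing F] (p : ℕ) (z : ↥(Tsub F)) : Prop :=
  orderOf z = p ∧ ∀ (g : ↥(Tsub F)) (P : Sylow p ↥(Tsub F)),
    g * z * g⁻¹ ∉ (P : Subgroup ↥(Tsub F)) ⊓
      Subgroup.centralizer ((P : Subgroup ↥(Tsub F)) : Set ↥(Tsub F))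

end BG

/-! A point `γ` fails to be adjacent to `α` exactly when `G_α ∩ G_γ` contains a subgroup of
prime order, i.e. when `γ` is fixed by an `M`-conjugate of some representative `H ∈ S`.
Conjugate subgroups have equally many fixed points and `H` has `|M : N_M(H)|` conjugates in
`M`, so `α` has at most `Σ_H |M : N_M(H)| Fix(H) ≤ Q̌(G) |Ω| < |Ω| / 2` non-neighbours. By
transitivity the same bound holds at every point, so the non-neighbours of two points cannot
cover `Ω`. -/

open Pointwise

theorem MulAction.card_orbit_subgroup_mul_card_inf_stabilizer {G X : Type*} [Group G]
    [MulAction G X] (M : Subgroup G) (x : X) :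
    Nat.card (orbit M x) * Nat.card ↥(M ⊓ stabilizer G x) = Nat.card M := by
  have hstab : stabilizer M x = (stabilizer G x).subgroupOf M := by
    ext; exact Iff.rfl
  rw [Nat.card_coe_set_eq, ← index_stabilizer, hstab, ← Subgroup.inf_subgroupOf_left,
    Nat.card_congr (Subgroup.subgroupOfEquivOfLe (inf_le_left : M ⊓ _ ≤ M)).toEquiv.symm,
    Subgroup.inf_subgroupOf_left, mul_comm, Subgroup.card_mul_index]

theorem Subgroup.exists_le_prime_card_of_ne_bot {G : Type*} [Group G] [Finite G]
    {K : Subgroup G} (hK : K ≠ ⊥) : ∃ L ≤ K, (Nat.card L).Prime := by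
  have : Nontrivial K := (Subgroup.nontrivial_iff_ne_bot K).mpr hK
  obtain ⟨p, hp, hdvd⟩ := Nat.exists_prime_and_dvd (Finite.one_lt_card (α := K)).ne'
  have : Fact p.Prime := ⟨hp⟩
  obtain ⟨y, hy⟩ := exists_prime_orderOf_dvd_card' (G := K) p hdvd
  refine ⟨Subgroup.zpowers (y : G), Subgroup.zpowers_le.mpr y.2, ?_⟩
  rwa [Nat.card_zpowers, Subgroup.orderOf_coe, hy]

theorem Set.inter_nonempty_of_ncard_compl_add_lt {α : Type*} [Finite α] {s t : Set α}
    (h : sᶜ.ncard + tᶜ.ncard < Nat.card α) : (s ∩ t).Nonempty := by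
  by_contra hst
  rw [Set.not_nonempty_iff_eq_empty] at hst
  have : Nat.card α ≤ sᶜ.ncard + tᶜ.ncard := by
    rw [← Set.ncard_univ, ← Set.compl_empty, ← hst, Set.compl_inter]
    exact Set.ncard_union_le _ _
  omega

namespace BG

section Conjugation

variable {G : Type*} [Group G]

/-- Its orbits on `Subgroup G` are the `M`-conjugacy classes of subgroups. -/
abbrev conjActSubgroup (M : Subgroup G) : Subgroup (ConjAct G) :=
  M.map (ConjAct.toConjAct : G ≃* ConjAct G).toMonoidHom

theorem toConjAct_smul_subgroup (g : G) (H : Subgroup G) :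
    ConjAct.toConjAct g • H = H.map (MulAut.conj g).toMonoidHom := rfl

theorem card_orbit_conj_mul_card_inf_normalizer (M H : Subgroup G) :
    Nat.card (orbit (conjActSubgroup M) H) * Nat.card ↥(M ⊓ Subgroup.normalizer (H : Set G)) =
      Nat.card M := by
  have hinj : Function.Injective (ConjAct.toConjAct : G ≃* ConjAct G).toMonoidHom :=
    ConjAct.toConjAct.injective
  have hstab : stabilizer (ConjAct G) H =
      (Subgroup.normalizer (H : Set G)).map (ConjAct.toConjAct : G ≃* ConjAct G).toMonoidHom := by
    ext c
    rw [mem_stabilizer_iff, Subgroup.mem_map_equiv]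
    exact Subgroup.conjAct_pointwise_smul_iff
  rw [← Subgroup.card_map_of_injective (K := M ⊓ _) hinj, Subgroup.map_inf _ _ _ hinj,
    ← hstab, MulAction.card_orbit_subgroup_mul_card_inf_stabilizer,
    Subgroup.card_map_of_injective hinj]

end Conjugation

section Action

variable {G : Type} [Group G] {Ω : Type} [MulAction G Ω]

theorem nFix_eq_ncard (H : Subgroup G) : nFix G Ω H = {ω : Ω | H ≤ stabilizer G ω}.ncard :=
  Nat.card_coe_set_eq _

theorem setOf_toConjAct_smul_le_stabilizer (g : G) (H : Subgroup G) :
    {ω : Ω | ConjAct.toConjAct g • H ≤ stabilizer G ω} =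
      g • {ω : Ω | H ≤ stabilizer G ω} := by
  ext ω
  rw [Set.mem_smul_set_iff_inv_smul_mem, Set.mem_ofPred_eq, Set.mem_ofPred_eq,
    stabilizer_smul_eq_stabilizer_map_conj, ← toConjAct_smul_subgroup,
    Subgroup.pointwise_smul_subset_iff, ConjAct.toConjAct_inv]

theorem nFix_smul [Finite Ω] (c : ConjAct G) (H : Subgroup G) :
    nFix G Ω (c • H) = nFix G Ω H := by
  rw [nFix_eq_ncard, nFix_eq_ncard, ← ConjAct.toConjAct_ofConjAct c,
    setOf_toConjAct_smul_le_stabilizer, Set.ncard_smul_set]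

theorem saxlNbr_smul (g : G) (α : Ω) : SaxlNbr G Ω (g • α) = g • SaxlNbr G Ω α := by
  ext β
  rw [Set.mem_smul_set_iff_inv_smul_mem]
  simp only [SaxlNbr, Set.mem_ofPred_eq]
  conv_lhs => rw [← smul_inv_smul g β]
  rw [stabilizer_smul_eq_stabilizer_map_conj, stabilizer_smul_eq_stabilizer_map_conj,
    ← toConjAct_smul_subgroup, ← toConjAct_smul_subgroup, ← Subgroup.smul_inf,
    smul_eq_iff_eq_inv_smul, Subgroup.smul_bot]

theorem compl_saxlNbr_subset [Finite G] {α : Ω} {M : Subgroup G} (hM : stabilizer G α = M)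
    {S : Finset (Subgroup G)} (hS : IsPrimeOrderClassReps G M S) :
    (SaxlNbr G Ω α)ᶜ ⊆
      ⋃ H ∈ S, ⋃ K : orbit (conjActSubgroup M) H,
        {ω | (K : Subgroup G) ≤ stabilizer G ω} := by
  intro γ hγ
  obtain ⟨K, hK, hKp⟩ := Subgroup.exists_le_prime_card_of_ne_bot hγ
  obtain ⟨H, ⟨hHS, g, hgM, hgK⟩, -⟩ := hS.2 K (hM ▸ hK.trans inf_le_left) hKp
  have hKH : K ∈ orbit (conjActSubgroup M) H :=
    ⟨(⟨ConjAct.toConjAct g, Subgroup.mem_map_of_mem _ hgM⟩ : conjActSubgroup M)⁻¹, by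
      change (ConjAct.toConjAct g)⁻¹ • H = K
      rw [← hgK, ← toConjAct_smul_subgroup, inv_smul_smul]⟩
  simp only [Set.mem_iUnion]
  exact ⟨H, hHS, ⟨K, hKH⟩, hK.trans inf_le_right⟩

theorem ncard_compl_saxlNbr_le [Finite G] [Finite Ω] {α : Ω} {M : Subgroup G}
    (hM : stabilizer G α = M) {S : Finset (Subgroup G)} (hS : IsPrimeOrderClassReps G M S) :
    (SaxlNbr G Ω α)ᶜ.ncard ≤
      ∑ H ∈ S, Nat.card (orbit (conjActSubgroup M) H) * nFix G Ω H := by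
  refine (Set.ncard_le_ncard (compl_saxlNbr_subset hM hS)).trans
    ((Finset.set_ncard_biUnion_le _ _).trans (Finset.sum_le_sum fun H _ => ?_))
  have : Fintype (orbit (conjActSubgroup M) H) := Fintype.ofFinite _
  refine (Set.ncard_iUnion_le_of_fintype _).trans_eq ?_
  have hfix : ∀ K : orbit (conjActSubgroup M) H, nFix G Ω K = nFix G Ω H := by
    rintro ⟨-, m, rfl⟩
    exact nFix_smul (m : ConjAct G) H
  simp only [← nFix_eq_ncard, hfix, Finset.sum_const, Finset.card_univ, smul_eq_mul,
    Nat.card_eq_fintype_card]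

theorem sum_card_orbit_mul_nFix_le_Qcheck_mul [Finite G] [Finite Ω] [Nonempty Ω]
    {M : Subgroup G} {S : Finset (Subgroup G)} (hS : ∀ H ∈ S, (Nat.card H).Prime) :
    ((∑ H ∈ S, Nat.card (orbit (conjActSubgroup M) H) * nFix G Ω H : ℕ) : ℚ) ≤
      Qcheck G Ω M S * Nat.card Ω := by
  have hΩ : (Nat.card Ω : ℚ) ≠ 0 := by exact_mod_cast Nat.card_pos.ne'
  rw [Qcheck, mul_right_comm, div_mul_cancel₀ _ hΩ, Finset.mul_sum]
  push_cast
  refine Finset.sum_le_sum fun H hH => ?_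
  have hN : (Nat.card ↥(M ⊓ Subgroup.normalizer (H : Set G)) : ℚ) ≠ 0 := by
    exact_mod_cast Nat.card_pos.ne'
  have hp : (1 : ℚ) ≤ Nat.card H - 1 := by
    have := (hS H hH).two_le
    linarith [(show (2 : ℚ) ≤ Nat.card H by exact_mod_cast this)]
  have horb : (Nat.card (orbit (conjActSubgroup M) H) : ℚ) =
      Nat.card M / Nat.card ↥(M ⊓ Subgroup.normalizer (H : Set G)) := by
    rw [eq_div_iff hN]
    exact_mod_cast card_orbit_conj_mul_card_inf_normalizer M H
  calc (Nat.card (orbit (conjActSubgroup M) H) : ℚ) * nFix G Ω H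
      = Nat.card M * (1 * nFix G Ω H / Nat.card ↥(M ⊓ Subgroup.normalizer (H : Set G))) := by
        rw [horb]; ring
    _ ≤ _ := by gcongr

theorem ncard_compl_saxlNbr_le_Qcheck_mul [Finite G] [Finite Ω] {α : Ω} {M : Subgroup G}
    (hM : stabilizer G α = M) {S : Finset (Subgroup G)} (hS : IsPrimeOrderClassReps G M S) :
    ((SaxlNbr G Ω α)ᶜ.ncard : ℚ) ≤ Qcheck G Ω M S * Nat.card Ω :=
  have : Nonempty Ω := ⟨α⟩
  (Nat.cast_le.mpr (ncard_compl_saxlNbr_le hM hS)).trans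
    (sum_card_orbit_mul_nFix_le_Qcheck_mul fun H hH => (hS.1 H hH).2)

theorem ncard_compl_saxlNbr_eq [Finite Ω] [IsPretransitive G Ω] (β α : Ω) :
    (SaxlNbr G Ω β)ᶜ.ncard = (SaxlNbr G Ω α)ᶜ.ncard := by
  obtain ⟨g, rfl⟩ := exists_smul_eq G α β
  rw [saxlNbr_smul, ← Set.smul_set_compl, Set.ncard_smul_set]

end Action

end BG

/-- If `Q̌(G) < 1/2` then any two vertices of the Saxl graph have a
common neighbour. -/
theorem common_neighbour_of_Qcheck_lt_half
    (G : Type) [Group G] [Finite G] (Ω : Type) [MulAction G Ω] [Finite Ω]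
    [MulAction.IsPretransitive G Ω] (α : Ω) (M : Subgroup G)
    (hM : MulAction.stabilizer G α = M)
    (S : Finset (Subgroup G)) (hS : BG.IsPrimeOrderClassReps G M S)
    (hQ : BG.Qcheck G Ω M S < 1 / 2) :
    ∀ a b : Ω, ∃ c : Ω,
      MulAction.stabilizer G a ⊓ MulAction.stabilizer G c = ⊥ ∧
      MulAction.stabilizer G b ⊓ MulAction.stabilizer G c = ⊥ := by
  have hα : 2 * (BG.SaxlNbr G Ω α)ᶜ.ncard < Nat.card Ω := by
    have : Nonempty Ω := ⟨α⟩
    have hΩ : (0 : ℚ) < Nat.card Ω := by exact_mod_cast Nat.card_pos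
    have hbad := BG.ncard_compl_saxlNbr_le_Qcheck_mul hM hS
    exact_mod_cast (show (2 * (BG.SaxlNbr G Ω α)ᶜ.ncard : ℚ) < Nat.card Ω by nlinarith)
  intro a b
  have hab : (BG.SaxlNbr G Ω a)ᶜ.ncard + (BG.SaxlNbr G Ω b)ᶜ.ncard < Nat.card Ω := by
    rw [BG.ncard_compl_saxlNbr_eq a α, BG.ncard_compl_saxlNbr_eq b α]
    omega
  obtain ⟨c, hca, hcb⟩ := Set.inter_nonempty_of_ncard_compl_add_lt hab
  exact ⟨c, hca, hcb⟩
end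

section
/- Let G and G₀ be finite primitive permutation groups on the same set Ω with b(G) = b(G₀) = 2, where G₀ is a subgroup of G and the point stabilizer (G₀)_α is contained in G_α for some α ∈ Ω. Let Γ and Γ₀ denote the unions of the regular suborbits of G and of G₀ relative to α, respectively. If Γ ∩ Γ^g ≠ ∅ for all g ∈ G, then Γ₀ ∩ Γ₀^h ≠ ∅ for all h ∈ G₀. (Indeed Γ ⊆ Γ₀.) -/
open Matrix MulAction

namespace BG

theorem saxlNbr_subset_saxlNbr_subgroup {G : Type} [Group G] {Ω : Type} [MulAction G Ω]
    (H : Subgroup G) (α : Ω) : SaxlNbr G Ω α ⊆ SaxlNbr H Ω α := by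
  intro β hβ
  rw [SaxlNbr, Set.mem_ofPred_eq, Subgroup.eq_bot_iff_forall] at hβ ⊢
  exact fun h hh => Subtype.ext (hβ h hh)

end BG

theorem BG_of_subgroup_general
    (G : Type) [Group G] (Ω : Type) [MulAction G Ω]
    (G₀ : Subgroup G) (α : Ω)
    (hBG : ∀ g : G, ∃ γ, γ ∈ BG.SaxlNbr G Ω α ∧ γ ∈ (fun x => g • x) '' BG.SaxlNbr G Ω α) :
    BG.SaxlNbr G Ω α ⊆ BG.SaxlNbr ↥G₀ Ω α ∧
    ∀ h : ↥G₀, ∃ γ, γ ∈ BG.SaxlNbr ↥G₀ Ω α ∧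
      γ ∈ (fun x => h • x) '' BG.SaxlNbr ↥G₀ Ω α := by
  have hsub := BG.saxlNbr_subset_saxlNbr_subgroup G₀ α
  refine ⟨hsub, fun h => ?_⟩
  obtain ⟨γ, hγ, β, hβ, rfl⟩ := hBG h
  exact ⟨h • β, hsub hγ, β, hsub hβ, rfl⟩

/-- If the BG-conjecture holds for `G`, it holds for a subgroup `G₀`
of `G` (both primitive of base size two); indeed `Γ ⊆ Γ₀`. -/
theorem BG_of_subgroup
    (G : Type) [Group G] [Finite G] (Ω : Type) [MulAction G Ω]
    (G₀ : Subgroup G) (α : Ω)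
    (hprim : BG.IsPrimitiveAction G Ω) (hprim₀ : BG.IsPrimitiveAction ↥G₀ Ω)
    (hb : BG.BaseSizeTwo G Ω) (hb₀ : BG.BaseSizeTwo ↥G₀ Ω)
    (hBG : ∀ g : G, ∃ γ, γ ∈ BG.SaxlNbr G Ω α ∧ γ ∈ (fun x => g • x) '' BG.SaxlNbr G Ω α) :
    BG.SaxlNbr G Ω α ⊆ BG.SaxlNbr ↥G₀ Ω α ∧
    ∀ h : ↥G₀, ∃ γ, γ ∈ BG.SaxlNbr ↥G₀ Ω α ∧
      γ ∈ (fun x => h • x) '' BG.SaxlNbr ↥G₀ Ω α :=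
  BG_of_subgroup_general G Ω G₀ α hBG
end
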